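/- Let Φ be an n×d real matrix and let s, l be disjoint index sets with δ_{|s|+|l|} < 1 (in particular Φ_lᵀΦ_l is invertible). Let P{Φ_l} = Φ_l(Φ_lᵀΦ_l)^{-1}Φ_lᵀ denote the orthogonal projection onto the column span of Φ_l. Then for any a ∈ R^{|s|}, ‖P{Φ_l} Φ_s a‖₂ ≤ (δ_{|s|+|l|} / sqrt(1 − δ_{|l|})) ‖a‖₂. -/

import Mathlib

/-!
Write `P{Φ_l} Φ_s a = Φ_l b`, where `b = (Φ_lᵀ Φ_l)⁻¹ Φ_lᵀ Φ_s a` solves the normal equations.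
These give `‖Φ_l b‖² = ⟨Φ_l b, Φ_s a⟩`, an inner product of the images of two vectors with
disjoint supports of total size `|s| + |l|`; by polarization and the RIP it is at most
`δ_{|s|+|l|} ‖b‖ ‖a‖`. The RIP of order `|l|` gives `‖Φ_l b‖ ≥ √(1 − δ_{|l|}) ‖b‖`, and the two
bounds combine to `‖Φ_l b‖ ≤ δ_{|s|+|l|} ‖a‖ / √(1 − δ_{|l|})`.
-/

open Matrix Finset

noncomputable section

/-- Number of nonzero entries of a vector. -/
def sparsity {d : ℕ} (x : Fin d → ℝ) : ℕ :=
  (Finset.univ.filter fun i => x i ≠ 0).card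

/-- Squared Euclidean norm. -/
def nsq {k : Type*} [Fintype k] (v : k → ℝ) : ℝ := ∑ i, v i ^ 2

/-- Euclidean (ℓ₂) norm. -/
def l2 {k : Type*} [Fintype k] (v : k → ℝ) : ℝ := Real.sqrt (nsq v)

/-- `Φ` satisfies the order-`t` restricted isometry property with constant `δ`. -/
def satRIP {n d : ℕ} (Φ : Matrix (Fin n) (Fin d) ℝ) (t : ℕ) (δ : ℝ) : Prop :=
  ∀ x : Fin d → ℝ, sparsity x ≤ t →
    (1 - δ) * nsq x ≤ nsq (Φ.mulVec x) ∧ nsq (Φ.mulVec x) ≤ (1 + δ) * nsq x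

/-- The order-`t` RIP constant of `Φ` : the smallest `δ ≥ 0` satisfying the RIP bounds. -/
def ripConst {n d : ℕ} (Φ : Matrix (Fin n) (Fin d) ℝ) (t : ℕ) : ℝ :=
  sInf {δ : ℝ | 0 ≤ δ ∧ satRIP Φ t δ}

/-- The submatrix of `Φ` consisting of the columns indexed by `s`. -/
def cols {n d : ℕ} (Φ : Matrix (Fin n) (Fin d) ℝ) (s : Finset (Fin d)) :
    Matrix (Fin n) {i // i ∈ s} ℝ := Φ.submatrix id (fun i => (i : Fin d))

/-- Orthogonal projection `P{Φ_s} = Φ_s (Φ_sᵀ Φ_s)⁻¹ Φ_sᵀ` onto the column span of `Φ_s`. -/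
def proj {n d : ℕ} (Φ : Matrix (Fin n) (Fin d) ℝ) (s : Finset (Fin d)) :
    Matrix (Fin n) (Fin n) ℝ :=
  cols Φ s * ((cols Φ s)ᵀ * cols Φ s)⁻¹ * (cols Φ s)ᵀ

/-- Least-squares residual `v^{⊥s} = (I - P{Φ_s}) v`. -/
def residVec {n d : ℕ} (Φ : Matrix (Fin n) (Fin d) ℝ) (s : Finset (Fin d)) (y : Fin n → ℝ) :
    Fin n → ℝ := y - (proj Φ s).mulVec y

/-- The `i`-th column of `Φ`. -/
def col {n d : ℕ} (Φ : Matrix (Fin n) (Fin d) ℝ) (i : Fin d) : Fin n → ℝ := fun k => Φ k i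

/-- `x` is a least-squares estimate of `y` supported on `s`:
it is supported on `s` and minimizes `‖y - Φ z‖₂` over all `z` supported on `s`. -/
def leastSq {n d : ℕ} (Φ : Matrix (Fin n) (Fin d) ℝ) (y : Fin n → ℝ) (s : Finset (Fin d))
    (x : Fin d → ℝ) : Prop :=
  (∀ i, i ∉ s → x i = 0) ∧
  ∀ z : Fin d → ℝ, (∀ i, i ∉ s → z i = 0) → nsq (y - Φ.mulVec x) ≤ nsq (y - Φ.mulVec z)

/-- The support of a vector, as a `Finset`. -/
def spt {d : ℕ} (x : Fin d → ℝ) : Finset (Fin d) :=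
  Finset.univ.filter fun i => x i ≠ 0

lemma nsq_nonneg {k : Type*} [Fintype k] (v : k → ℝ) : 0 ≤ nsq v :=
  Finset.sum_nonneg fun _ _ => sq_nonneg _

lemma nsq_eq_dotProduct {k : Type*} [Fintype k] (v : k → ℝ) : nsq v = v ⬝ᵥ v := by
  simp only [nsq, dotProduct, sq]

lemma l2_sq {k : Type*} [Fintype k] (v : k → ℝ) : l2 v ^ 2 = nsq v :=
  Real.sq_sqrt (nsq_nonneg v)

lemma nsq_eq_zero_iff {k : Type*} [Fintype k] {v : k → ℝ} : nsq v = 0 ↔ v = 0 := by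
  rw [nsq_eq_dotProduct, dotProduct_self_eq_zero]

lemma l2_pos {k : Type*} [Fintype k] {v : k → ℝ} (hv : v ≠ 0) : 0 < l2 v :=
  Real.sqrt_pos.2 <| (nsq_nonneg v).lt_of_ne' (mt nsq_eq_zero_iff.1 hv)

lemma nsq_smul {k : Type*} [Fintype k] (c : ℝ) (v : k → ℝ) : nsq (c • v) = c ^ 2 * nsq v := by
  simp only [nsq, Pi.smul_apply, smul_eq_mul, mul_pow, Finset.mul_sum]

lemma nsq_add_sub_nsq_sub {k : Type*} [Fintype k] (u v : k → ℝ) :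
    nsq (u + v) - nsq (u - v) = 4 * (u ⬝ᵥ v) := by
  simp only [nsq_eq_dotProduct, add_dotProduct, sub_dotProduct, dotProduct_add,
    dotProduct_sub, dotProduct_comm v u]
  ring

lemma nsq_add_of_disjoint {k : Type*} [Fintype k] {u v : k → ℝ} (huv : ∀ i, u i = 0 ∨ v i = 0) :
    nsq (u + v) = nsq u + nsq v := by
  simp only [nsq, ← Finset.sum_add_distrib]
  refine Finset.sum_congr rfl fun i _ => ?_
  rcases huv i with h | h <;> simp [h]

lemma sparsity_add_le {d : ℕ} (x y : Fin d → ℝ) :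
    sparsity (x + y) ≤ sparsity x + sparsity y := by
  refine (Finset.card_le_card fun i hi => ?_).trans (Finset.card_union_le _ _)
  simp only [mem_filter, mem_univ, true_and, mem_union, Pi.add_apply] at hi ⊢
  by_contra! h
  simp [h.1, h.2] at hi

lemma sparsity_neg {d : ℕ} (x : Fin d → ℝ) : sparsity (-x) = sparsity x := by
  simp only [sparsity, Pi.neg_apply, ne_eq, neg_eq_zero]

lemma nsq_neg {k : Type*} [Fintype k] (v : k → ℝ) : nsq (-v) = nsq v := by
  simp only [nsq, Pi.neg_apply, neg_sq]

lemma sparsity_smul_le {d : ℕ} (c : ℝ) (x : Fin d → ℝ) : sparsity (c • x) ≤ sparsity x := by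
  refine Finset.card_le_card fun i hi => ?_
  simp only [mem_filter, mem_univ, true_and, Pi.smul_apply, smul_eq_mul] at hi ⊢
  exact right_ne_zero_of_mul hi

section RIP

variable {n d : ℕ} (Φ : Matrix (Fin n) (Fin d) ℝ) (t : ℕ)

lemma nsq_mulVec_le (x : Fin d → ℝ) :
    nsq (Φ *ᵥ x) ≤ (∑ k, ∑ i, Φ k i ^ 2) * nsq x := by
  rw [Finset.sum_mul]
  refine Finset.sum_le_sum fun k _ => ?_
  simpa [Matrix.mulVec, dotProduct, nsq] using
    Finset.sum_mul_sq_le_sq_mul_sq Finset.univ (fun i => Φ k i) x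

lemma ripSet_nonempty : {δ : ℝ | 0 ≤ δ ∧ satRIP Φ t δ}.Nonempty := by
  set C : ℝ := ∑ k, ∑ i, Φ k i ^ 2
  have hC : 0 ≤ C := Finset.sum_nonneg fun _ _ => Finset.sum_nonneg fun _ _ => sq_nonneg _
  refine ⟨1 + C, by linarith, fun x _ => ⟨?_, ?_⟩⟩
  · nlinarith [nsq_nonneg (Φ *ᵥ x), nsq_nonneg x]
  · nlinarith [nsq_mulVec_le Φ x, nsq_nonneg x]

lemma ripSet_isClosed : IsClosed {δ : ℝ | 0 ≤ δ ∧ satRIP Φ t δ} := by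
  simp only [satRIP, Set.ofPred_and, Set.ofPred_forall]
  exact (isClosed_le continuous_const continuous_id).inter <|
    isClosed_iInter fun x => isClosed_iInter fun _ =>
      (isClosed_le (by fun_prop) continuous_const).inter
        (isClosed_le continuous_const (by fun_prop))

lemma ripConst_nonneg : 0 ≤ ripConst Φ t :=
  le_csInf (ripSet_nonempty Φ t) fun _ hδ => hδ.1

lemma satRIP_ripConst : satRIP Φ t (ripConst Φ t) :=
  ((ripSet_isClosed Φ t).csInf_mem (ripSet_nonempty Φ t) ⟨0, fun _ hδ => hδ.1⟩).2

variable {t} in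
lemma ripConst_mono {t' : ℕ} (h : t ≤ t') : ripConst Φ t ≤ ripConst Φ t' :=
  csInf_le_csInf ⟨0, fun _ hδ => hδ.1⟩ (ripSet_nonempty Φ t') fun _ ⟨h0, hδ⟩ =>
    ⟨h0, fun x hx => hδ x (hx.trans h)⟩

variable {Φ t}

lemma dotProduct_mulVec_le_nsq_add {δ : ℝ} (hRIP : satRIP Φ t δ) {x y : Fin d → ℝ}
    (hxy : ∀ i, x i = 0 ∨ y i = 0) (ht : sparsity x + sparsity y ≤ t) :
    (Φ *ᵥ x) ⬝ᵥ (Φ *ᵥ y) ≤ δ / 2 * (nsq x + nsq y) := by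
  have hxy' : ∀ i, x i = 0 ∨ (-y) i = 0 := fun i => (hxy i).imp id neg_eq_zero.2
  have hadd := (hRIP (x + y) ((sparsity_add_le x y).trans ht)).2
  have hsub := (hRIP (x + -y) ((sparsity_add_le x (-y)).trans (by rwa [sparsity_neg]))).1
  rw [nsq_add_of_disjoint hxy] at hadd
  rw [nsq_add_of_disjoint hxy', nsq_neg, ← sub_eq_add_neg] at hsub
  have := nsq_add_sub_nsq_sub (Φ *ᵥ x) (Φ *ᵥ y)
  rw [← Matrix.mulVec_add, ← Matrix.mulVec_sub] at this
  linarith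

lemma dotProduct_mulVec_le_mul_l2 {δ : ℝ} (hRIP : satRIP Φ t δ) {x y : Fin d → ℝ}
    (hxy : ∀ i, x i = 0 ∨ y i = 0) (ht : sparsity x + sparsity y ≤ t) :
    (Φ *ᵥ x) ⬝ᵥ (Φ *ᵥ y) ≤ δ * (l2 x * l2 y) := by
  rcases eq_or_ne x 0 with rfl | hx
  · simp [l2, nsq]
  rcases eq_or_ne y 0 with rfl | hy
  · simp [l2, nsq]
  have hx' := l2_pos hx
  have hy' := l2_pos hy
  -- rescale `x` so that both vectors have norm `l2 y`, where the AM-GM bound is sharp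
  set c := l2 y / l2 x
  have hc : 0 < c := div_pos hy' hx'
  have hcx : ∀ i, (c • x) i = 0 ∨ y i = 0 := fun i => (hxy i).imp (fun h => by simp [h]) id
  have key := dotProduct_mulVec_le_nsq_add hRIP hcx
    ((Nat.add_le_add_right (sparsity_smul_le c x) _).trans ht)
  rw [Matrix.mulVec_smul, smul_dotProduct, smul_eq_mul, nsq_smul, ← l2_sq x, ← l2_sq y] at key
  have hc_mul : c * l2 x = l2 y := div_mul_cancel₀ _ hx'.ne'
  refine le_of_mul_le_mul_left (key.trans_eq ?_) hc
  linear_combination δ / 2 * (c * l2 x - l2 y) * hc_mul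

end RIP

section ZeroExtension

variable {d : ℕ} (s : Finset (Fin d)) (a : {i // i ∈ s} → ℝ)

def zeroExtend : Fin d → ℝ := fun i => if h : i ∈ s then a ⟨i, h⟩ else 0

lemma zeroExtend_of_notMem {i : Fin d} (hi : i ∉ s) : zeroExtend s a i = 0 := dif_neg hi

lemma sum_mul_zeroExtend (f : Fin d → ℝ) :
    ∑ i, f i * zeroExtend s a i = ∑ j : {i // i ∈ s}, f j * a j := by
  rw [← Finset.sum_subset (Finset.subset_univ s) fun i _ hi => by
      rw [zeroExtend_of_notMem s a hi, mul_zero], ← Finset.sum_coe_sort s]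
  exact Finset.sum_congr rfl fun j _ => by simp [zeroExtend]

lemma sparsity_zeroExtend_le : sparsity (zeroExtend s a) ≤ s.card :=
  Finset.card_le_card fun i hi => by
    by_contra h
    simp [zeroExtend_of_notMem s a h] at hi

lemma nsq_zeroExtend : nsq (zeroExtend s a) = nsq a := by
  simp only [nsq, sq, sum_mul_zeroExtend]
  exact Finset.sum_congr rfl fun j _ => by simp [zeroExtend]

lemma l2_zeroExtend : l2 (zeroExtend s a) = l2 a := by
  rw [l2, l2, nsq_zeroExtend]

lemma mulVec_zeroExtend {n : ℕ} (Φ : Matrix (Fin n) (Fin d) ℝ) :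
    Φ *ᵥ zeroExtend s a = cols Φ s *ᵥ a := by
  funext k
  exact sum_mul_zeroExtend s a (Φ k)

end ZeroExtension

section Columns

variable {n d t : ℕ} {Φ : Matrix (Fin n) (Fin d) ℝ} {δ : ℝ}

lemma one_sub_mul_nsq_le_nsq_cols_mulVec (hRIP : satRIP Φ t δ) {l : Finset (Fin d)}
    (hl : l.card ≤ t) (b : {i // i ∈ l} → ℝ) : (1 - δ) * nsq b ≤ nsq (cols Φ l *ᵥ b) := by
  simpa only [mulVec_zeroExtend, nsq_zeroExtend] using
    (hRIP _ ((sparsity_zeroExtend_le l b).trans hl)).1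

lemma dotProduct_cols_mulVec_le (hRIP : satRIP Φ t δ) {s l : Finset (Fin d)}
    (hdisj : Disjoint s l) (ht : s.card + l.card ≤ t) (a : {i // i ∈ s} → ℝ)
    (b : {i // i ∈ l} → ℝ) :
    (cols Φ l *ᵥ b) ⬝ᵥ (cols Φ s *ᵥ a) ≤ δ * (l2 b * l2 a) := by
  have hba : ∀ i, zeroExtend l b i = 0 ∨ zeroExtend s a i = 0 := fun i =>
    (em (i ∈ l)).symm.imp (zeroExtend_of_notMem l b)
      fun hi => zeroExtend_of_notMem s a (Finset.disjoint_right.1 hdisj hi)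
  simpa only [mulVec_zeroExtend, l2_zeroExtend] using
    dotProduct_mulVec_le_mul_l2 hRIP hba <| (add_comm _ _).trans_le <|
      (Nat.add_le_add (sparsity_zeroExtend_le s a) (sparsity_zeroExtend_le l b)).trans ht

lemma sqrt_one_sub_mul_l2_le_l2_cols_mulVec (hRIP : satRIP Φ t δ) (hδ : δ ≤ 1)
    {l : Finset (Fin d)} (hl : l.card ≤ t) (b : {i // i ∈ l} → ℝ) :
    Real.sqrt (1 - δ) * l2 b ≤ l2 (cols Φ l *ᵥ b) := by
  rw [l2, l2, ← Real.sqrt_mul (by linarith)]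
  exact Real.sqrt_le_sqrt (one_sub_mul_nsq_le_nsq_cols_mulVec hRIP hl b)

lemma posDef_transpose_cols_mul_cols (hRIP : satRIP Φ t δ) (hδ : δ < 1) {l : Finset (Fin d)}
    (hl : l.card ≤ t) : ((cols Φ l)ᵀ * cols Φ l).PosDef := by
  rw [← conjTranspose_eq_transpose_of_trivial]
  refine .conjTranspose_mul_self _ fun x y hxy => sub_eq_zero.1 <| nsq_eq_zero_iff.1 ?_
  have hlow := one_sub_mul_nsq_le_nsq_cols_mulVec hRIP hl (x - y)
  rw [Matrix.mulVec_sub, hxy, sub_self, nsq_eq_zero_iff.2 rfl] at hlow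
  nlinarith [nsq_nonneg (x - y)]

end Columns

lemma nsq_mulVec_eq_of_normal_eq {m k : Type*} [Fintype m] [Fintype k] {A : Matrix m k ℝ}
    {b : k → ℝ} {w : m → ℝ} (h : (Aᵀ * A) *ᵥ b = Aᵀ *ᵥ w) :
    nsq (A *ᵥ b) = (A *ᵥ b) ⬝ᵥ w := by
  rw [nsq_eq_dotProduct, ← dotProduct_transpose_mulVec, Matrix.mulVec_mulVec, h,
    dotProduct_transpose_mulVec, dotProduct_comm]

lemma le_div_mul_of_sq_le {v α β δ r : ℝ} (hr : 0 < r) (hδα : 0 ≤ δ * α)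
    (hv : v ^ 2 ≤ δ * α * β) (hβ : r * β ≤ v) : v ≤ δ / r * α := by
  rw [div_mul_eq_mul_div, le_div_iff₀ hr]
  rcases le_or_gt v 0 with hv0 | hv0
  · nlinarith
  · nlinarith [mul_le_mul_of_nonneg_left hβ hδα]

/-- for disjoint `s, l` with `δ_{|s|+|l|} < 1`,
`‖P{Φ_l} Φ_s a‖₂ ≤ (δ_{|s|+|l|} / √(1 − δ_{|l|})) ‖a‖₂`. -/
theorem stmt2 {n d : ℕ} (Φ : Matrix (Fin n) (Fin d) ℝ) (s l : Finset (Fin d))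
    (hdisj : Disjoint s l) (hδ : ripConst Φ (s.card + l.card) < 1)
    (a : {i // i ∈ s} → ℝ) :
    l2 ((proj Φ l).mulVec ((cols Φ s).mulVec a)) ≤
      ripConst Φ (s.card + l.card) / Real.sqrt (1 - ripConst Φ l.card) * l2 a := by
  have hδl : ripConst Φ l.card < 1 := (ripConst_mono Φ le_add_self).trans_lt hδ
  set A := cols Φ l
  set w := cols Φ s *ᵥ a
  have hG : IsUnit (Aᵀ * A).det := (isUnit_iff_isUnit_det _).1
    (posDef_transpose_cols_mul_cols (satRIP_ripConst Φ l.card) hδl le_rfl).isUnit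
  set b := (Aᵀ * A)⁻¹ *ᵥ Aᵀ *ᵥ w
  have hproj : proj Φ l *ᵥ w = A *ᵥ b := by
    simp only [proj, b, A, Matrix.mulVec_mulVec, Matrix.mul_assoc]
  have hnormal : (Aᵀ * A) *ᵥ b = Aᵀ *ᵥ w := by
    rw [Matrix.mulVec_mulVec, mul_nonsing_inv _ hG, one_mulVec]
  have hsq : l2 (A *ᵥ b) ^ 2 ≤ ripConst Φ (s.card + l.card) * l2 a * l2 b := by
    rw [l2_sq, nsq_mulVec_eq_of_normal_eq hnormal, mul_assoc, mul_comm (l2 a)]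
    exact dotProduct_cols_mulVec_le (satRIP_ripConst Φ _) hdisj le_rfl a b
  have hlow := sqrt_one_sub_mul_l2_le_l2_cols_mulVec (satRIP_ripConst Φ l.card) hδl.le le_rfl b
  rw [hproj]
  exact le_div_mul_of_sq_le (Real.sqrt_pos.2 (sub_pos.2 hδl))
    (mul_nonneg (ripConst_nonneg Φ _) (Real.sqrt_nonneg _)) hsq hlow

end
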